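/- The Malthusian parameter λ is not differentiable at any point of the diagonal ℋ: for x = (x_b,x_d) ∈ 𝒱 with x_b = x_d, the function t ↦ λ(x_b + t, x_d) has right derivative 0 at t = 0 and left derivative e^{-λ(x) x_b} / G(x) > 0 at t = 0; hence λ is not differentiable at x. -/

import Mathlib

/-!
For `m > 1` the equation `∫₀^m e^{-λa} da = 1` reads `e^{-λm} = 1 - λ`, i.e. `m = φ(λ)` with
`φ(l) = -log(1 - l)/l`, which is strictly increasing on `(0, 1)`. Hence
`λ(x) = φ⁻¹(min(x_b, x_d))`. Starting on the diagonal, increasing `x_b` leaves the minimum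
unchanged, so `λ` is locally constant to the right, while decreasing `x_b` moves along `φ⁻¹`,
whose derivative `1/φ'(λ) = e^{-λm}/G` is positive by implicit differentiation. Unequal
one-sided derivatives rule out differentiability.
-/

open MeasureTheory Set Filter

noncomputable section

/-- The viable set `𝒱 = {(x_b, x_d) : min(x_b, x_d) > 1}`. -/
def viable : Set (ℝ × ℝ) := {x : ℝ × ℝ | 1 < min x.1 x.2}

/-- `lam` is a Malthusian parameter function on `𝒱`. -/
def IsMalthusian (lam : ℝ × ℝ → ℝ) : Prop :=
  ∀ x ∈ viable, 0 < lam x ∧ (∫ a in (0:ℝ)..(min x.1 x.2), Real.exp (-(lam x) * a)) = 1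

/-- The mean generation time `G(x) = ∫₀^{min(x_b,x_d)} a e^{-λ(x) a} da`. -/
def genTime (lam : ℝ × ℝ → ℝ) (x : ℝ × ℝ) : ℝ :=
  ∫ a in (0:ℝ)..(min x.1 x.2), a * Real.exp (-(lam x) * a)

open Real Topology

lemma integral_exp_neg_mul {l : ℝ} (hl : l ≠ 0) (m : ℝ) :
    ∫ a in (0:ℝ)..m, exp (-l * a) = (1 - exp (-l * m)) / l := by
  rw [intervalIntegral.integral_comp_mul_left (fun a => exp a) (neg_ne_zero.2 hl), integral_exp]
  simp only [mul_zero, exp_zero, smul_eq_mul]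
  field_simp
  ring

lemma integral_mul_exp_neg_mul {l : ℝ} (hl : l ≠ 0) (m : ℝ) :
    ∫ a in (0:ℝ)..m, a * exp (-l * a) = (1 - (l * m + 1) * exp (-l * m)) / l ^ 2 := by
  have hderiv : ∀ a ∈ uIcc (0:ℝ) m,
      HasDerivAt (fun b => (l * b + 1) * exp (-l * b) / -l ^ 2) (a * exp (-l * a)) a := by
    intro a _
    have h₁ : HasDerivAt (fun b : ℝ => l * b + 1) l a := by
      simpa using ((hasDerivAt_id a).const_mul l).add_const 1
    have h₂ : HasDerivAt (fun b : ℝ => exp (-l * b)) (exp (-l * a) * -l) a := by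
      simpa using ((hasDerivAt_id a).const_mul (-l)).exp
    refine ((h₁.mul h₂).div_const (-l ^ 2)).congr_deriv ?_
    field_simp
    ring
  have hcont : Continuous fun a => a * exp (-l * a) := by fun_prop
  rw [intervalIntegral.integral_eq_sub_of_hasDerivAt hderiv (hcont.intervalIntegrable _ _)]
  simp only [mul_zero, zero_add, exp_zero]
  ring

lemma integral_mul_exp_neg_mul_pos (l : ℝ) {m : ℝ} (hm : 0 < m) :
    0 < ∫ a in (0:ℝ)..m, a * exp (-l * a) :=
  intervalIntegral.intervalIntegral_pos_of_pos_on
    ((by fun_prop : Continuous fun a => a * exp (-l * a)).intervalIntegrable _ _)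
    (fun a ha => mul_pos ha.1 (exp_pos _)) hm

lemma exp_neg_mul_eq_one_sub_of_integral_eq_one {l m : ℝ} (hl : 0 < l)
    (h : ∫ a in (0:ℝ)..m, exp (-l * a) = 1) : exp (-l * m) = 1 - l := by
  rw [integral_exp_neg_mul hl.ne', div_eq_one_iff_eq hl.ne'] at h
  linarith

/-- `phi l` is the horizon `m` for which `l` solves `∫₀^m e^{-la} da = 1`. -/
def phi (l : ℝ) : ℝ := -log (1 - l) / l

lemma phi_pos {l : ℝ} (hl : l ∈ Ioo (0:ℝ) 1) : 0 < phi l :=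
  div_pos (neg_pos.2 (log_neg (by linarith [hl.2]) (by linarith [hl.1]))) hl.1

lemma exp_neg_mul_phi {l : ℝ} (hl : l ∈ Ioo (0:ℝ) 1) : exp (-l * phi l) = 1 - l := by
  rw [phi, neg_mul, mul_div_cancel₀ _ hl.1.ne', neg_neg, exp_log (by linarith [hl.2])]

/-- Implicit differentiation of `∫₀^m e^{-la} da = 1`: `dm/dl = ∫₀^m a e^{-la} da / e^{-lm}`. -/
lemma hasDerivAt_phi {l : ℝ} (hl : l ∈ Ioo (0:ℝ) 1) :
    HasDerivAt phi ((∫ a in (0:ℝ)..phi l, a * exp (-l * a)) / exp (-l * phi l)) l := by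
  have hl0 : l ≠ 0 := hl.1.ne'
  have h1l : 1 - l ≠ 0 := by linarith [hl.2]
  have hlog : HasDerivAt (fun t => -log (1 - t)) (1 / (1 - l)) l := by
    refine (((hasDerivAt_id l).const_sub 1).log h1l).neg.congr_deriv ?_
    simp [neg_div]
  refine (hlog.div (hasDerivAt_id l) hl0).congr_deriv ?_
  rw [integral_mul_exp_neg_mul hl0, exp_neg_mul_phi hl, phi, id]
  field_simp
  ring

lemma strictMonoOn_phi : StrictMonoOn phi (Ioo (0:ℝ) 1) := by
  refine strictMonoOn_of_deriv_pos (convex_Ioo 0 1)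
    (fun l hl => (hasDerivAt_phi hl).continuousAt.continuousWithinAt) fun l hl => ?_
  rw [interior_Ioo] at hl
  rw [(hasDerivAt_phi hl).deriv]
  exact div_pos (integral_mul_exp_neg_mul_pos l (phi_pos hl)) (exp_pos _)

lemma DifferentiableAt.eq_of_hasDerivWithinAt_Ici_Iic {E : Type*} [NormedAddCommGroup E]
    [NormedSpace ℝ E] {f : ℝ → E} {a b : E} {t : ℝ} (hf : DifferentiableAt ℝ f t)
    (ha : HasDerivWithinAt f a (Ici t) t) (hb : HasDerivWithinAt f b (Iic t) t) : a = b :=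
  calc a = deriv f t := (uniqueDiffWithinAt_Ici t).eq_deriv _ ha hf.hasDerivAt.hasDerivWithinAt
    _ = b := (uniqueDiffWithinAt_Iic t).eq_deriv _ hf.hasDerivAt.hasDerivWithinAt hb

lemma mk_mem_viable {a b : ℝ} (ha : 1 < a) (hb : 1 < b) : (a, b) ∈ viable :=
  lt_min ha hb

namespace IsMalthusian

variable {lam : ℝ × ℝ → ℝ} {y y' : ℝ × ℝ}

lemma exp_eq (hlam : IsMalthusian lam) (hy : y ∈ viable) :
    exp (-lam y * min y.1 y.2) = 1 - lam y :=
  exp_neg_mul_eq_one_sub_of_integral_eq_one (hlam y hy).1 (hlam y hy).2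

lemma mem_Ioo (hlam : IsMalthusian lam) (hy : y ∈ viable) : lam y ∈ Ioo (0:ℝ) 1 :=
  ⟨(hlam y hy).1, by linarith [exp_pos (-lam y * min y.1 y.2), hlam.exp_eq hy]⟩

lemma phi_eq (hlam : IsMalthusian lam) (hy : y ∈ viable) : phi (lam y) = min y.1 y.2 := by
  have h := hlam.exp_eq hy
  rw [← exp_neg_mul_phi (hlam.mem_Ioo hy), exp_eq_exp] at h
  exact (mul_left_cancel₀ (neg_ne_zero.2 (hlam.mem_Ioo hy).1.ne') h).symm

lemma eq_of_min_eq (hlam : IsMalthusian lam) (hy : y ∈ viable) (hy' : y' ∈ viable)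
    (h : min y.1 y.2 = min y'.1 y'.2) : lam y = lam y' :=
  strictMonoOn_phi.injOn (hlam.mem_Ioo hy) (hlam.mem_Ioo hy')
    (by rw [hlam.phi_eq hy, hlam.phi_eq hy', h])

lemma phi_diag (hlam : IsMalthusian lam) {s : ℝ} (hs : 1 < s) : phi (lam (s, s)) = s := by
  simpa using hlam.phi_eq (mk_mem_viable hs hs)

lemma diag_phi (hlam : IsMalthusian lam) {l : ℝ} (hl : l ∈ Ioo (0:ℝ) 1) (h1 : 1 < phi l) :
    lam (phi l, phi l) = l :=
  strictMonoOn_phi.injOn (hlam.mem_Ioo (mk_mem_viable h1 h1)) hl (hlam.phi_diag h1)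

lemma monotoneOn_diag (hlam : IsMalthusian lam) : MonotoneOn (fun s => lam (s, s)) (Ioi 1) := by
  intro s hs t ht hst
  by_contra! h
  have := strictMonoOn_phi (hlam.mem_Ioo (mk_mem_viable ht ht))
    (hlam.mem_Ioo (mk_mem_viable hs hs)) h
  rw [hlam.phi_diag hs, hlam.phi_diag ht] at this
  linarith

lemma continuousAt_diag (hlam : IsMalthusian lam) {s : ℝ} (hs : 1 < s) :
    ContinuousAt (fun s => lam (s, s)) s := by
  have hmem := hlam.mem_Ioo (mk_mem_viable hs hs)
  refine continuousAt_of_monotoneOn_of_image_mem_nhds hlam.monotoneOn_diag (Ioi_mem_nhds hs) ?_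
  have hphi : ∀ᶠ l in 𝓝 (lam (s, s)), 1 < phi l :=
    (hasDerivAt_phi hmem).continuousAt.eventually
      (lt_mem_nhds (by rwa [hlam.phi_diag hs]))
  filter_upwards [Ioo_mem_nhds hmem.1 hmem.2, hphi] with l hl h1
  exact ⟨phi l, h1, hlam.diag_phi hl h1⟩

lemma hasDerivAt_diag (hlam : IsMalthusian lam) {s : ℝ} (hs : 1 < s) :
    HasDerivAt (fun s => lam (s, s)) (exp (-lam (s, s) * s) / genTime lam (s, s)) s := by
  have hmem := hlam.mem_Ioo (mk_mem_viable hs hs)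
  have hderiv := hasDerivAt_phi hmem
  rw [hlam.phi_diag hs] at hderiv
  refine (hderiv.of_local_left_inverse (hlam.continuousAt_diag hs)
    (div_pos (integral_mul_exp_neg_mul_pos _ (by linarith)) (exp_pos _)).ne' ?_).congr_deriv ?_
  · filter_upwards [Ioi_mem_nhds hs] with t ht
    exact hlam.phi_diag ht
  · rw [inv_div, genTime, min_self]

end IsMalthusian

/-- On the diagonal `ℋ = {x_b = x_d}` the Malthusian parameter is not differentiable:
the map `t ↦ λ(x_b + t, x_d)` has right derivative `0` and left derivative
`e^{-λ(x) x_b}/G(x) > 0` at `t = 0`, hence `λ` is not differentiable at `x`. -/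
theorem malthus_not_differentiable_on_diagonal (lam : ℝ × ℝ → ℝ) (hlam : IsMalthusian lam)
    (x : ℝ × ℝ) (hx : x ∈ viable) (hdiag : x.1 = x.2) :
    HasDerivWithinAt (fun t => lam (x.1 + t, x.2)) 0 (Ici 0) 0 ∧
    HasDerivWithinAt (fun t => lam (x.1 + t, x.2))
      (Real.exp (-(lam x) * x.1) / genTime lam x) (Iic 0) 0 ∧
    0 < Real.exp (-(lam x) * x.1) / genTime lam x ∧
    ¬ DifferentiableAt ℝ lam x := by
  have hmin : min x.1 x.2 = x.1 := by rw [← hdiag, min_self]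
  have hx1 : 1 < x.1 := hmin ▸ hx
  have hx2 : 1 < x.2 := hdiag ▸ hx1
  have hright : HasDerivWithinAt (fun t => lam (x.1 + t, x.2)) 0 (Ici 0) 0 := by
    refine (hasDerivWithinAt_const (0:ℝ) _ (lam x)).congr (fun t (ht : 0 ≤ t) => ?_) (by simp)
    refine hlam.eq_of_min_eq (mk_mem_viable (by linarith) hx2) hx ?_
    rw [hmin, ← hdiag, min_eq_right (by linarith)]
  have hleft : HasDerivWithinAt (fun t => lam (x.1 + t, x.2))
      (exp (-lam x * x.1) / genTime lam x) (Iic 0) 0 := by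
    have hx_eq : (x.1, x.1) = x := Prod.ext rfl hdiag
    have hshift := (HasDerivAt.comp_const_add x.1 0
      (by rw [add_zero]; exact hlam.hasDerivAt_diag hx1)).hasDerivWithinAt (s := Iic 0)
    rw [hx_eq] at hshift
    refine hshift.congr_of_eventuallyEq ?_ (by simp [hx_eq])
    filter_upwards [self_mem_nhdsWithin, mem_nhdsWithin_of_mem_nhds
      (Ioi_mem_nhds (show 1 - x.1 < 0 by linarith))] with t (ht : t ≤ 0) (ht' : 1 - x.1 < t)
    have h1t : 1 < x.1 + t := by linarith
    refine hlam.eq_of_min_eq (mk_mem_viable h1t hx2) (mk_mem_viable h1t h1t) ?_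
    rw [min_self, ← hdiag, min_eq_left (by linarith)]
  have hpos : 0 < exp (-lam x * x.1) / genTime lam x := by
    rw [genTime, hmin]
    exact div_pos (exp_pos _) (integral_mul_exp_neg_mul_pos _ (by linarith))
  refine ⟨hright, hleft, hpos, fun hdiff => hpos.ne ?_⟩
  have hcurve : DifferentiableAt ℝ (fun t => lam (x.1 + t, x.2)) 0 :=
    DifferentiableAt.comp (g := lam) 0 (by simpa using hdiff) (by fun_prop)
  exact hcurve.eq_of_hasDerivWithinAt_Ici_Iic hright hleft
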